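/- The fundamental functions N_m : 𝔽ⁿ → 𝔽, m ∈ ℳ, of the (σ,δ)-evaluation satisfy the recursion: N₁(a) = 1 for the empty word 1, and for every word m ∈ ℳ and every a ∈ 𝔽ⁿ, the column vector whose i-th entry is N_{xᵢm}(a) equals σ(N_m(a))·a + δ(N_m(a)). -/

import Mathlib

/- Common setup: free multivariate skew polynomial rings over a division ring. -/

open Matrix Finsupp

/-- The underlying left `𝔽`-module of the free multivariate skew polynomial ring:
the free left `𝔽`-module with basis the free monoid on `n` symbols. -/
abbrev SkewPoly (𝔽 : Type*) [DivisionRing 𝔽] (n : ℕ) : Type _ := FreeMonoid (Fin n) →₀ 𝔽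

namespace SkewPoly

variable {𝔽 : Type*} [DivisionRing 𝔽] {n : ℕ}

/-- The variable `xᵢ` as a skew polynomial. -/
noncomputable def X (𝔽 : Type*) [DivisionRing 𝔽] {n : ℕ} (i : Fin n) : SkewPoly 𝔽 n :=
  Finsupp.single (FreeMonoid.of i) 1

/-- The constant `a` as a skew polynomial (coefficient on the empty word). -/
noncomputable def C {𝔽 : Type*} [DivisionRing 𝔽] (n : ℕ) (a : 𝔽) :
    SkewPoly 𝔽 n := Finsupp.single 1 a

/-- The degree of a skew polynomial: the maximal length of a word in its support
(`⊥` for the zero polynomial). -/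
noncomputable def deg (F : SkewPoly 𝔽 n) : WithBot ℕ :=
  F.support.sup fun m => ((FreeMonoid.length m : ℕ) : WithBot ℕ)

/-- A matrix morphism `σ : 𝔽 → Mₙ(𝔽)`: a unital ring homomorphism. -/
def IsMatrixMorphism (σ : 𝔽 → Matrix (Fin n) (Fin n) 𝔽) : Prop :=
  σ 1 = 1 ∧ (∀ a b : 𝔽, σ (a + b) = σ a + σ b) ∧ (∀ a b : 𝔽, σ (a * b) = σ a * σ b)

/-- A `σ`-vector derivation `δ : 𝔽 → 𝔽ⁿ`: additive with `δ(ab) = σ(a)δ(b) + δ(a)b`. -/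
def IsVectorDerivation (σ : 𝔽 → Matrix (Fin n) (Fin n) 𝔽) (δ : 𝔽 → Fin n → 𝔽) : Prop :=
  (∀ a b : 𝔽, δ (a + b) = δ a + δ b) ∧
    (∀ a b : 𝔽, δ (a * b) = σ a *ᵥ δ b + fun i => δ a i * b)

/-- A multiplication on the free module `SkewPoly 𝔽 n` making it a ring (with the
existing addition) whose identity is the empty word, which restricts to concatenation
on monomials, is additive on degrees of nonzero elements, and for which left
multiplication by constants is scalar multiplication. -/
structure RawMul (𝔽 : Type*) [DivisionRing 𝔽] (n : ℕ) where
  /-- the multiplication -/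
  mul : SkewPoly 𝔽 n → SkewPoly 𝔽 n → SkewPoly 𝔽 n
  mul_add : ∀ F G H : SkewPoly 𝔽 n, mul F (G + H) = mul F G + mul F H
  add_mul : ∀ F G H : SkewPoly 𝔽 n, mul (F + G) H = mul F H + mul G H
  mul_assoc : ∀ F G H : SkewPoly 𝔽 n, mul (mul F G) H = mul F (mul G H)
  one_mul : ∀ F : SkewPoly 𝔽 n, mul (C n 1) F = F
  mul_one : ∀ F : SkewPoly 𝔽 n, mul F (C n 1) = F
  mono_mul_mono : ∀ m m' : FreeMonoid (Fin n),
    mul (Finsupp.single m 1) (Finsupp.single m' 1) = Finsupp.single (m * m') 1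
  const_mul : ∀ (a : 𝔽) (F : SkewPoly 𝔽 n), mul (C n a) F = a • F
  deg_mul : ∀ F G : SkewPoly 𝔽 n, F ≠ 0 → G ≠ 0 → deg (mul F G) = deg F + deg G

/-- The multiplication `S` satisfies the commutation rule
`xᵢ a = Σⱼ σ_{i,j}(a) xⱼ + δᵢ(a)`. -/
def HasCommRule (S : RawMul 𝔽 n) (σ : 𝔽 → Matrix (Fin n) (Fin n) 𝔽)
    (δ : 𝔽 → Fin n → 𝔽) : Prop :=
  ∀ (i : Fin n) (a : 𝔽),
    S.mul (X 𝔽 i) (C n a) =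
      (∑ j : Fin n, Finsupp.single (FreeMonoid.of j) (σ a i j)) + C n (δ a i)

/-- `F = Σᵢ Gᵢ (xᵢ - aᵢ) + b`, i.e. `b` is a remainder of `F` upon right division
by `x₁ - a₁, …, xₙ - aₙ`; equivalently `F - b` lies in the left ideal generated by
the `xᵢ - aᵢ`. -/
def Decomposes (S : RawMul 𝔽 n) (a : Fin n → 𝔽) (F : SkewPoly 𝔽 n) (b : 𝔽) : Prop :=
  ∃ G : Fin n → SkewPoly 𝔽 n,
    F = (∑ i : Fin n, S.mul (G i) (X 𝔽 i - C n (a i))) + C n b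

/-- The evaluation of `F` at the point `a`: the unique `b ∈ 𝔽` such that `F - b`
lies in the left ideal generated by `x₁ - a₁, …, xₙ - aₙ`. -/
noncomputable def eval (S : RawMul 𝔽 n) (a : Fin n → 𝔽) (F : SkewPoly 𝔽 n) : 𝔽 :=
  letI := Classical.propDecidable (∃ b : 𝔽, Decomposes S a F b)
  if h : ∃ b : 𝔽, Decomposes S a F b then h.choose else 0

/-- The `(σ,δ)`-conjugate `a^c = σ(c) a c⁻¹ + δ(c) c⁻¹` of `a` with respect to `c`. -/
noncomputable def conj (σ : 𝔽 → Matrix (Fin n) (Fin n) 𝔽) (δ : 𝔽 → Fin n → 𝔽)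
    (a : Fin n → 𝔽) (c : 𝔽) : Fin n → 𝔽 :=
  fun i => (σ c *ᵥ a) i * c⁻¹ + δ c i * c⁻¹

/-- `I(Ω)`: the set of skew polynomials vanishing at every point of `Ω`. -/
def zeroIdeal (S : RawMul 𝔽 n) (Ω : Set (Fin n → 𝔽)) : Set (SkewPoly 𝔽 n) :=
  {F | ∀ a ∈ Ω, eval S a F = 0}

/-- The left ideal of `SkewPoly 𝔽 n` generated by `x₁ - a₁, …, xₙ - aₙ`
(the set of sums of left multiples of the generators). -/
def pointIdeal (S : RawMul 𝔽 n) (a : Fin n → 𝔽) : Set (SkewPoly 𝔽 n) :=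
  {F | ∃ G : Fin n → SkewPoly 𝔽 n, F = ∑ i : Fin n, S.mul (G i) (X 𝔽 i - C n (a i))}

/-- The P-closure `Ω̄ = Z(I(Ω))` of a set of points `Ω`. -/
def pClosure (S : RawMul 𝔽 n) (Ω : Set (Fin n → 𝔽)) : Set (Fin n → 𝔽) :=
  {a | ∀ F ∈ zeroIdeal S Ω, eval S a F = 0}

/-- `Ω` is P-closed if it equals its P-closure. -/
def IsPClosed (S : RawMul 𝔽 n) (Ω : Set (Fin n → 𝔽)) : Prop := pClosure S Ω = Ω

/-- `B` is P-independent: no point of `B` lies in the P-closure of the rest. -/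
def PIndep (S : RawMul 𝔽 n) (B : Set (Fin n → 𝔽)) : Prop :=
  ∀ a ∈ B, a ∉ pClosure S (B \ {a})

/-- `B` is a P-basis of `Ω`: a P-independent subset of `Ω` whose P-closure is `Ω`. -/
def IsPBasis (S : RawMul 𝔽 n) (B Ω : Set (Fin n → 𝔽)) : Prop :=
  B ⊆ Ω ∧ PIndep S B ∧ pClosure S B = Ω

/-- `Ω` is finitely generated: it is the P-closure of a finite subset of itself. -/
def FinGen (S : RawMul 𝔽 n) (Ω : Set (Fin n → 𝔽)) : Prop :=
  ∃ G : Set (Fin n → 𝔽), G.Finite ∧ G ⊆ Ω ∧ pClosure S G = Ω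

/-- The rank of a P-closed set: the (common) cardinality of its P-bases. -/
noncomputable def pRank (S : RawMul 𝔽 n) (Ω : Set (Fin n → 𝔽)) : ℕ :=
  sInf {k : ℕ | ∃ B : Finset (Fin n → 𝔽), IsPBasis S ↑B Ω ∧ B.card = k}

/-- The image of the evaluation map `E_Ω : R → 𝔽^Ω`, as a left `𝔽`-subspace of `𝔽^Ω`
(the span of the image; the image is itself a subspace since evaluation is left linear). -/
noncomputable def evalSpan (S : RawMul 𝔽 n) (Ω : Set (Fin n → 𝔽)) :
    Submodule 𝔽 (↥Ω → 𝔽) :=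
  Submodule.span 𝔽 (Set.range fun F : SkewPoly 𝔽 n => fun a : ↥Ω => eval S ↑a F)

/-- `I` is a two-sided ideal with respect to the multiplication `S`. -/
def IsTwoSidedIdealSet (S : RawMul 𝔽 n) (I : Set (SkewPoly 𝔽 n)) : Prop :=
  (0 : SkewPoly 𝔽 n) ∈ I ∧ (∀ F ∈ I, ∀ G ∈ I, F + G ∈ I) ∧ (∀ F ∈ I, -F ∈ I) ∧
    (∀ F ∈ I, ∀ G : SkewPoly 𝔽 n, S.mul G F ∈ I) ∧
    (∀ F ∈ I, ∀ G : SkewPoly 𝔽 n, S.mul F G ∈ I)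


/-- The left row-rank of the skew Vandermonde matrix `V_d(G)`: the dimension of the
left `𝔽`-span of its rows `(N_m(c))_{c ∈ G}`, indexed by the words `m` of length `< d`,
where `N_m(c)` is the evaluation of the monomial `m` at the point `c`. -/
noncomputable def vandermondeRank (S : RawMul 𝔽 n) (G : Finset (Fin n → 𝔽)) (d : ℕ) :
    Cardinal :=
  Module.rank 𝔽 ↥(Submodule.span 𝔽 (Set.range
    fun m : {m : FreeMonoid (Fin n) // FreeMonoid.length m < d} =>
      fun c : ↥G => eval S ↑c (Finsupp.single (m : FreeMonoid (Fin n)) (1 : 𝔽))))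

end SkewPoly

open SkewPoly

/-! The remainder of `F` modulo the left ideal generated by the `xᵢ - aᵢ` is unique: a relation
`Σ Gᵢ (xᵢ - aᵢ) = c` with some `Gᵢ ≠ 0` is impossible, because right multiplication by `xᵢ` shifts
words while right multiplication by a constant does not raise degrees, so for a longest word `m` of
some `Gᵢ` the coefficient of `m xᵢ` is `Gᵢ(m) ≠ 0` on the left and `0` on the right.
Existence and the recursion come together from the commutation rule, rewritten as
`xᵢ b = Σⱼ σ_{ij}(b) (xⱼ - aⱼ) + (σ(b) a + δ(b))ᵢ`: if `F = Σⱼ Gⱼ (xⱼ - aⱼ) + b` then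
`xᵢ F = Σⱼ (xᵢ Gⱼ + σ_{ij}(b)) (xⱼ - aⱼ) + (σ(b) a + δ(b))ᵢ`. -/

namespace SkewPoly

variable {𝔽 : Type*} [DivisionRing 𝔽] {n : ℕ}

namespace RawMul

variable (S : RawMul 𝔽 n)

noncomputable def mulLeft (F : SkewPoly 𝔽 n) : SkewPoly 𝔽 n →+ SkewPoly 𝔽 n :=
  AddMonoidHom.mk' (S.mul F) (S.mul_add F)

noncomputable def mulRight (G : SkewPoly 𝔽 n) : SkewPoly 𝔽 n →+ SkewPoly 𝔽 n :=
  AddMonoidHom.mk' (S.mul · G) (S.add_mul · · G)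

theorem zero_mul (F : SkewPoly 𝔽 n) : S.mul 0 F = 0 := map_zero (S.mulRight F)

theorem mul_zero (F : SkewPoly 𝔽 n) : S.mul F 0 = 0 := map_zero (S.mulLeft F)

theorem sub_mul (F G H : SkewPoly 𝔽 n) : S.mul (F - G) H = S.mul F H - S.mul G H :=
  map_sub (S.mulRight H) F G

theorem mul_sub (F G H : SkewPoly 𝔽 n) : S.mul F (G - H) = S.mul F G - S.mul F H :=
  map_sub (S.mulLeft F) G H

theorem mul_sum {ι : Type*} (s : Finset ι) (F : SkewPoly 𝔽 n) (G : ι → SkewPoly 𝔽 n) :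
    S.mul F (∑ j ∈ s, G j) = ∑ j ∈ s, S.mul F (G j) :=
  map_sum (S.mulLeft F) G s

theorem smul_mul (b : 𝔽) (F G : SkewPoly 𝔽 n) : S.mul (b • F) G = b • S.mul F G := by
  rw [← S.const_mul, S.mul_assoc, S.const_mul]

theorem X_mul_single (i : Fin n) (m : FreeMonoid (Fin n)) :
    S.mul (X 𝔽 i) (Finsupp.single m 1) = Finsupp.single (FreeMonoid.of i * m) 1 :=
  S.mono_mul_mono _ _

theorem mul_X (F : SkewPoly 𝔽 n) (i : Fin n) :
    S.mul F (X 𝔽 i) = F.mapDomain (· * FreeMonoid.of i) := by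
  induction F using Finsupp.induction_linear with
  | zero => rw [S.zero_mul, Finsupp.mapDomain_zero]
  | add F G hF hG => rw [S.add_mul, hF, hG, Finsupp.mapDomain_add]
  | single m b =>
    rw [Finsupp.mapDomain_single, ← _root_.mul_one b, ← smul_eq_mul, ← Finsupp.smul_single,
      ← Finsupp.smul_single, S.smul_mul, X, S.mono_mul_mono]

end RawMul

theorem sum_mapDomain_mul_of_apply (G : Fin n → SkewPoly 𝔽 n) (m : FreeMonoid (Fin n))
    (i : Fin n) :
    (∑ j, (G j).mapDomain (· * FreeMonoid.of j)) (m * FreeMonoid.of i) = G i m := by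
  rw [Finsupp.finsetSum_apply, Finset.sum_eq_single_of_mem i (Finset.mem_univ i)]
  · exact Finsupp.mapDomain_apply (mul_left_injective (FreeMonoid.of i)) (G i) m
  · rintro j - hji
    refine Finsupp.mapDomain_of_notMem_range _ _ ?_
    rintro ⟨m', hm'⟩
    have := congrArg (fun w => FreeMonoid.toList w |>.getLast?) hm'
    simp only [FreeMonoid.toList_mul, FreeMonoid.toList_of, List.getLast?_append,
      List.getLast?_singleton, Option.some_or, Option.some.injEq] at this
    exact hji this

theorem length_le_deg {F : SkewPoly 𝔽 n} {m : FreeMonoid (Fin n)} (hm : m ∈ F.support) :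
    (m.length : WithBot ℕ) ≤ deg F :=
  Finset.le_sup (f := fun m : FreeMonoid (Fin n) => (m.length : WithBot ℕ)) hm

theorem apply_eq_zero_of_deg_lt {F : SkewPoly 𝔽 n} {w : FreeMonoid (Fin n)}
    (h : deg F < w.length) : F w = 0 :=
  Finsupp.notMem_support_iff.mp fun hw => (length_le_deg hw).not_gt h

theorem deg_C {b : 𝔽} (hb : b ≠ 0) : deg (C n b) = 0 := by
  rw [deg, C, Finsupp.support_single _ hb, Finset.sup_singleton,
    FreeMonoid.length_one, Nat.cast_zero]

theorem deg_mul_C_le (S : RawMul 𝔽 n) (F : SkewPoly 𝔽 n) (b : 𝔽) :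
    deg (S.mul F (C n b)) ≤ deg F := by
  rcases eq_or_ne b 0 with rfl | hb
  · rw [C, Finsupp.single_zero, S.mul_zero]
    exact bot_le
  rcases eq_or_ne F 0 with rfl | hF
  · rw [S.zero_mul]
  rw [S.deg_mul F (C n b) hF (Finsupp.single_ne_zero.mpr hb), deg_C hb, add_zero]

theorem eq_zero_of_sum_mul_X_sub_C_eq_C (S : RawMul 𝔽 n) (a : Fin n → 𝔽)
    (G : Fin n → SkewPoly 𝔽 n) {c : 𝔽}
    (h : ∑ i, S.mul (G i) (X 𝔽 i - C n (a i)) = C n c) : c = 0 := by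
  by_cases hG : ∀ i, G i = 0
  · simpa only [hG, S.zero_mul, Finset.sum_const_zero, eq_comm, C, Finsupp.single_eq_zero]
      using h
  obtain ⟨j, hj⟩ := not_forall.mp hG
  obtain ⟨⟨i, m⟩, him, hmax⟩ := Finset.exists_max_image (Finset.univ.sigma fun i => (G i).support)
    (fun p => p.2.length) ⟨⟨j, _⟩, Finset.mem_sigma.mpr
      ⟨Finset.mem_univ j, (Finsupp.support_nonempty_iff.mpr hj).choose_spec⟩⟩
  have hdeg : ∀ k, deg (G k) < (m * FreeMonoid.of i).length := fun k =>
    calc deg (G k) ≤ m.length := Finset.sup_le fun m' hm' => WithBot.coe_le_coe.mpr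
            (hmax ⟨k, m'⟩ (Finset.mem_sigma.mpr ⟨Finset.mem_univ k, hm'⟩))
      _ < (m * FreeMonoid.of i).length := WithBot.coe_lt_coe.mpr (by simp)
  have hshift : ∑ k, (G k).mapDomain (· * FreeMonoid.of k) =
      C n c + ∑ k, S.mul (G k) (C n (a k)) := by
    simp only [← S.mul_X, ← h, S.mul_sub, Finset.sum_sub_distrib, sub_add_cancel]
  have hcoeff := DFunLike.congr_fun hshift (m * FreeMonoid.of i)
  rw [sum_mapDomain_mul_of_apply, Finsupp.add_apply, Finsupp.finsetSum_apply,
    Finset.sum_eq_zero fun k _ => apply_eq_zero_of_deg_lt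
      ((deg_mul_C_le S (G k) (a k)).trans_lt (hdeg k)), C,
    Finsupp.single_eq_of_ne (by simp), add_zero] at hcoeff
  exact absurd hcoeff (Finsupp.mem_support_iff.mp (Finset.mem_sigma.mp him).2)

theorem Decomposes.unique {S : RawMul 𝔽 n} {a : Fin n → 𝔽} {F : SkewPoly 𝔽 n} {b b' : 𝔽}
    (hb : Decomposes S a F b) (hb' : Decomposes S a F b') : b = b' := by
  obtain ⟨G, hG⟩ := hb
  obtain ⟨G', hG'⟩ := hb'
  refine (sub_eq_zero.mp (eq_zero_of_sum_mul_X_sub_C_eq_C S a (G - G') ?_)).symm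
  simp only [Pi.sub_apply, S.sub_mul, Finset.sum_sub_distrib]
  rw [eq_sub_of_add_eq hG.symm, eq_sub_of_add_eq hG'.symm, sub_sub_sub_cancel_left, C, C, C,
    Finsupp.single_sub]

theorem eval_eq_of_decomposes {S : RawMul 𝔽 n} {a : Fin n → 𝔽} {F : SkewPoly 𝔽 n} {b : 𝔽}
    (h : Decomposes S a F b) : eval S a F = b := by
  have hex : ∃ b, Decomposes S a F b := ⟨b, h⟩
  rw [eval, dif_pos hex]
  exact hex.choose_spec.unique h

theorem decomposes_C (S : RawMul 𝔽 n) (a : Fin n → 𝔽) (b : 𝔽) : Decomposes S a (C n b) b :=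
  ⟨0, by simp only [Pi.zero_apply, S.zero_mul, Finset.sum_const_zero, zero_add]⟩

variable {σ : 𝔽 → Matrix (Fin n) (Fin n) 𝔽} {δ : 𝔽 → Fin n → 𝔽} {S : RawMul 𝔽 n}

theorem X_mul_C_eq (hS : HasCommRule S σ δ) (a : Fin n → 𝔽) (i : Fin n) (b : 𝔽) :
    S.mul (X 𝔽 i) (C n b) =
      ∑ j, S.mul (C n (σ b i j)) (X 𝔽 j - C n (a j)) + C n ((σ b *ᵥ a) i + δ b i) := by
  rw [hS i b]
  simp only [S.const_mul, smul_sub, Finset.sum_sub_distrib]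
  simp only [X, C, Finsupp.smul_single, smul_eq_mul, mul_one, Matrix.mulVec, dotProduct,
    Finsupp.single_add, Finsupp.single_finsetSum]
  abel

theorem Decomposes.X_mul (hS : HasCommRule S σ δ) {a : Fin n → 𝔽} {F : SkewPoly 𝔽 n} {b : 𝔽}
    (h : Decomposes S a F b) (i : Fin n) :
    Decomposes S a (S.mul (X 𝔽 i) F) ((σ b *ᵥ a) i + δ b i) := by
  obtain ⟨G, rfl⟩ := h
  refine ⟨fun j => S.mul (X 𝔽 i) (G j) + C n (σ b i j), ?_⟩
  simp only [S.mul_add, S.mul_sum, X_mul_C_eq hS a i b, S.add_mul, Finset.sum_add_distrib,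
    S.mul_assoc]
  abel

theorem exists_decomposes_single (hS : HasCommRule S σ δ) (a : Fin n → 𝔽)
    (m : FreeMonoid (Fin n)) : ∃ b, Decomposes S a (Finsupp.single m 1) b := by
  induction m using FreeMonoid.recOn with
  | one => exact ⟨1, decomposes_C S a 1⟩
  | of_mul i m ih =>
    obtain ⟨b, hb⟩ := ih
    exact ⟨_, S.X_mul_single i m ▸ hb.X_mul hS i⟩

end SkewPoly

theorem stmt2_general {𝔽 : Type*} [DivisionRing 𝔽] {n : ℕ}
    (σ : 𝔽 → Matrix (Fin n) (Fin n) 𝔽) (δ : 𝔽 → Fin n → 𝔽)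
    (S : RawMul 𝔽 n) (hS : HasCommRule S σ δ) :
    (∀ a : Fin n → 𝔽, eval S a (Finsupp.single (1 : FreeMonoid (Fin n)) (1 : 𝔽)) = 1) ∧
    (∀ (m : FreeMonoid (Fin n)) (a : Fin n → 𝔽),
      (fun i : Fin n => eval S a (Finsupp.single (FreeMonoid.of i * m) (1 : 𝔽))) =
        σ (eval S a (Finsupp.single m (1 : 𝔽))) *ᵥ a +
          δ (eval S a (Finsupp.single m (1 : 𝔽)))) := by
  refine ⟨fun a => eval_eq_of_decomposes (decomposes_C S a 1), fun m a => funext fun i => ?_⟩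
  obtain ⟨b, hb⟩ := exists_decomposes_single hS a m
  rw [← S.X_mul_single, eval_eq_of_decomposes (hb.X_mul hS i), eval_eq_of_decomposes hb]
  rfl

/-- Recursion for the fundamental functions `N_m(a) = m(a)`:
`N₁(a) = 1` and `(N_(xᵢm)(a))ᵢ = σ(N_m(a)) a + δ(N_m(a))`. -/
theorem stmt2 {𝔽 : Type*} [DivisionRing 𝔽] {n : ℕ} (hn : 0 < n)
    (σ : 𝔽 → Matrix (Fin n) (Fin n) 𝔽) (δ : 𝔽 → Fin n → 𝔽)
    (hσ : IsMatrixMorphism σ) (hδ : IsVectorDerivation σ δ)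
    (S : RawMul 𝔽 n) (hS : HasCommRule S σ δ) :
    (∀ a : Fin n → 𝔽, eval S a (Finsupp.single (1 : FreeMonoid (Fin n)) (1 : 𝔽)) = 1) ∧
    (∀ (m : FreeMonoid (Fin n)) (a : Fin n → 𝔽),
      (fun i : Fin n => eval S a (Finsupp.single (FreeMonoid.of i * m) (1 : 𝔽))) =
        σ (eval S a (Finsupp.single m (1 : 𝔽))) *ᵥ a +
          δ (eval S a (Finsupp.single m (1 : 𝔽)))) :=
  stmt2_general σ δ S hS
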